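/- For every integer k ≥ 1, every τ ∈ ℍ satisfying the nonvanishing assumption, and every z with |q_τ| < |q_z| < 1, the function z ↦ P_1[θ,φ](z,τ) is (k−1) times complex differentiable at z and P_k[θ,φ](z,τ) = ((−1)^{k−1}/(k−1)!) · (∂/∂z)^{k−1} P_1[θ,φ](z,τ); equivalently, (∂/∂z) P_m[θ,φ](z,τ) = −m · P_{m+1}[θ,φ](z,τ) for every integer m ≥ 1. -/

import Mathlib

open Complex Filter

/-- `qpow w n = e^{2πi n w}`, i.e. `q_w^n` for a real exponent `n`. -/
noncomputable def qpow (w : ℂ) (n : ℝ) : ℂ := Complex.exp (2 * Real.pi * Complex.I * n * w)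

/-- `qq w = e^{2πi w} = q_w`. -/
noncomputable def qq (w : ℂ) : ℂ := Complex.exp (2 * Real.pi * Complex.I * w)

/-- The region `|q_τ| < |q_z| < 1`. -/
def Reg (τ z : ℂ) : Prop := ‖qq τ‖ < ‖qq z‖ ∧ ‖qq z‖ < 1

/-- The `n = λ + m` term of the series defining the twisted Weierstrass function
`P_k[θ,φ](z,τ)`, where the term is omitted when `(θ,φ) = (1,1)` (i.e. `λ = 0` and
`θ = 1`) and `n = 0`. -/
noncomputable def Pterm (k : ℕ) (lam : ℝ) (θ : ℂ) (τ z : ℂ) (m : ℤ) : ℂ :=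
  if lam = 0 ∧ θ = 1 ∧ m = 0 then 0
  else ((lam + (m : ℝ) : ℝ) : ℂ) ^ (k - 1) * qpow z (lam + (m : ℝ)) /
    (1 - θ⁻¹ * qpow τ (lam + (m : ℝ)))

/-- The twisted Weierstrass function
`P_k[θ,φ](z,τ) = ((−2πi)^k/(k−1)!) Σ'_{n ∈ λ+ℤ} n^{k−1} q_z^n/(1 − θ⁻¹ q_τ^n)`. -/
noncomputable def twP (k : ℕ) (lam : ℝ) (θ : ℂ) (τ z : ℂ) : ℂ :=
  ((-(2 * Real.pi * Complex.I)) ^ k / (Nat.factorial (k - 1) : ℂ)) *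
    ∑' m : ℤ, Pterm k lam θ τ z m

/-! Every summand of `twP k` is a constant multiple of `w ↦ q_w^n`, and `∂_w q_w^n = 2πi n q_w^n`
turns the summand of `P_k` into that of `P_{k+1}`; so termwise differentiation gives
`∂_z P_k = -k P_{k+1}`, and iterating from `P_1` gives the formula for the `(k-1)`-st derivative.
Termwise differentiation is justified on a horizontal strip inside `0 < im w < im τ`: there each
summand is dominated by its values on the two boundary lines, and on such a line the summand
`n^e q_z^n / (1 - θ⁻¹ q_τ^n)` is `O(n⁻²)`, decaying like `q_z^n` as `n → ∞` and like
`θ q_{z-τ}^n` as `n → -∞`. -/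

open Asymptotics Topology
open scoped Real

lemma norm_qpow (w : ℂ) (x : ℝ) : ‖qpow w x‖ = Real.exp (-(2 * π * x * w.im)) := by
  simp [qpow, Complex.norm_exp]

lemma qpow_zero_left (x : ℝ) : qpow 0 x = 1 := by
  simp [qpow]

lemma qpow_ne_zero (w : ℂ) (x : ℝ) : qpow w x ≠ 0 :=
  Complex.exp_ne_zero _

lemma qpow_neg_neg (w : ℂ) (x : ℝ) : qpow (-w) (-x) = qpow w x := by
  simp [qpow]

lemma qpow_mul_qpow_neg (w : ℂ) (x : ℝ) : qpow w x * qpow w (-x) = 1 := by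
  simp [qpow, ← Complex.exp_add]

lemma qpow_mul_qpow_neg_right (z τ : ℂ) (x : ℝ) : qpow z x * qpow τ (-x) = qpow (z - τ) x := by
  simp only [qpow, ← Complex.exp_add]
  push_cast
  ring_nf

lemma hasDerivAt_qpow (x : ℝ) (w : ℂ) :
    HasDerivAt (fun w => qpow w x) (2 * π * Complex.I * x * qpow w x) w := by
  have h := ((hasDerivAt_id w).const_mul (2 * π * Complex.I * x)).cexp
  simp only [id, mul_one] at h
  exact h.congr_deriv (mul_comm _ _)

lemma im_mem_Ioo_of_reg {τ z : ℂ} (h : Reg τ z) : z.im ∈ Set.Ioo 0 τ.im := by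
  have norm_qq (w : ℂ) : ‖qq w‖ = Real.exp (-(2 * π * w.im)) := by
    simpa [qpow, qq] using norm_qpow w 1
  obtain ⟨hτz, hz⟩ := h
  rw [norm_qq, norm_qq, Real.exp_lt_exp] at hτz
  rw [norm_qq, Real.exp_lt_one_iff] at hz
  constructor <;> nlinarith [Real.pi_pos]

section Pterm

variable (k : ℕ) (lam : ℝ) (θ τ : ℂ)

lemma Pterm_eq_mul_qpow (w : ℂ) (m : ℤ) :
    Pterm k lam θ τ w m = Pterm k lam θ τ 0 m * qpow w (lam + m) := by
  unfold Pterm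
  split_ifs
  · simp
  · rw [qpow_zero_left]
    ring

variable {k} in
lemma Pterm_succ (hk : 1 ≤ k) (w : ℂ) (m : ℤ) :
    Pterm (k + 1) lam θ τ w m = ((lam + m : ℝ) : ℂ) * Pterm k lam θ τ w m := by
  obtain ⟨j, rfl⟩ := Nat.exists_eq_add_of_le' hk
  unfold Pterm
  split_ifs
  · simp
  · simp only [Nat.add_sub_cancel]
    ring

variable {k} in
lemma hasDerivAt_Pterm (hk : 1 ≤ k) (m : ℤ) (w : ℂ) :
    HasDerivAt (fun w => Pterm k lam θ τ w m)
      (2 * π * Complex.I * Pterm (k + 1) lam θ τ w m) w := by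
  have h := (hasDerivAt_qpow (lam + m) w).const_mul (Pterm k lam θ τ 0 m)
  rw [Pterm_succ lam θ τ hk, Pterm_eq_mul_qpow k lam θ τ w m]
  refine (h.congr_deriv (by push_cast; ring)).congr_of_eventuallyEq ?_
  exact Eventually.of_forall fun w => Pterm_eq_mul_qpow k lam θ τ w m

lemma norm_qpow_le_add {a b : ℝ} {w : ℂ} (ha : a ≤ w.im) (hb : w.im ≤ b) (x : ℝ) :
    ‖qpow w x‖ ≤ ‖qpow (a * Complex.I) x‖ + ‖qpow (b * Complex.I) x‖ := by
  simp only [norm_qpow, Complex.mul_I_im, Complex.ofReal_re]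
  rcases le_total 0 x with hx | hx
  · refine le_add_of_le_of_nonneg (Real.exp_le_exp.2 ?_) (Real.exp_nonneg _)
    nlinarith [mul_nonneg Real.pi_pos.le hx]
  · refine le_add_of_nonneg_of_le (Real.exp_nonneg _) (Real.exp_le_exp.2 ?_)
    nlinarith [mul_nonpos_of_nonneg_of_nonpos Real.pi_pos.le hx]

lemma norm_Pterm_le_add {a b : ℝ} {w : ℂ} (ha : a ≤ w.im) (hb : w.im ≤ b) (m : ℤ) :
    ‖Pterm k lam θ τ w m‖ ≤
      ‖Pterm k lam θ τ (a * Complex.I) m‖ + ‖Pterm k lam θ τ (b * Complex.I) m‖ := by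
  rw [Pterm_eq_mul_qpow k lam θ τ w m, Pterm_eq_mul_qpow k lam θ τ (a * Complex.I) m,
    Pterm_eq_mul_qpow k lam θ τ (b * Complex.I) m, norm_mul, norm_mul, norm_mul, ← mul_add]
  exact mul_le_mul_of_nonneg_left (norm_qpow_le_add ha hb _) (norm_nonneg _)

end Pterm

lemma isBigO_pow_mul_exp_neg_atTop {a : ℝ} (ha : 0 < a) (e : ℕ) :
    (fun x : ℝ => x ^ e * Real.exp (-(a * x))) =O[atTop] fun x => (x ^ 2)⁻¹ := by
  refine IsBigO.of_bound 1 ?_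
  filter_upwards [(isLittleO_pow_exp_pos_mul_atTop (e + 2) ha).bound one_pos,
    eventually_gt_atTop 0] with x hx hx0
  rw [Real.norm_of_nonneg (by positivity), Real.norm_of_nonneg (by positivity), one_mul] at hx
  rw [Real.norm_of_nonneg (by positivity), Real.norm_of_nonneg (by positivity), one_mul]
  calc x ^ e * Real.exp (-(a * x)) = x ^ (e + 2) * Real.exp (-(a * x)) * (x ^ 2)⁻¹ := by
        field_simp
        ring
    _ ≤ Real.exp (a * x) * Real.exp (-(a * x)) * (x ^ 2)⁻¹ := by gcongr
    _ = (x ^ 2)⁻¹ := by rw [← Real.exp_add, add_neg_cancel, Real.exp_zero, one_mul]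

lemma isBigO_pow_mul_qpow_atTop {w : ℂ} (hw : 0 < w.im) (e : ℕ) :
    (fun x : ℝ => (x : ℂ) ^ e * qpow w x) =O[atTop] fun x => (x ^ 2)⁻¹ := by
  refine IsBigO.of_norm_left <|
    (isBigO_pow_mul_exp_neg_atTop (by positivity : 0 < 2 * π * w.im) e).congr' ?_ .rfl
  filter_upwards [eventually_ge_atTop 0] with x hx
  rw [norm_mul, norm_pow, norm_qpow, Complex.norm_real, Real.norm_of_nonneg hx]
  ring_nf

lemma isBigO_pow_mul_qpow_atBot {w : ℂ} (hw : w.im < 0) (e : ℕ) :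
    (fun x : ℝ => (x : ℂ) ^ e * qpow w x) =O[atBot] fun x => (x ^ 2)⁻¹ := by
  have h := (isBigO_pow_mul_qpow_atTop (w := -w) (by simpa using hw) e).comp_tendsto
    tendsto_neg_atBot_atTop
  refine IsBigO.of_norm_left (h.norm_left.congr (fun x => ?_) (fun x => ?_))
  · simp [qpow_neg_neg]
  · simp

lemma tendsto_qpow_atTop {w : ℂ} (hw : 0 < w.im) : Tendsto (qpow w) atTop (𝓝 0) := by
  rw [tendsto_zero_iff_norm_tendsto_zero]
  have h : Tendsto (fun x : ℝ => 2 * π * x * w.im) atTop atTop :=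
    (tendsto_id.const_mul_atTop Real.two_pi_pos).atTop_mul_const hw
  simp_rw [norm_qpow]
  exact Real.tendsto_exp_atBot.comp (tendsto_neg_atTop_atBot.comp h)

lemma isBigO_pow_mul_qpow_div_atTop (e : ℕ) (θ : ℂ) {τ z : ℂ} (hz : z.im ∈ Set.Ioo 0 τ.im) :
    (fun x : ℝ => (x : ℂ) ^ e * qpow z x / (1 - θ⁻¹ * qpow τ x)) =O[atTop]
      fun x => (x ^ 2)⁻¹ := by
  have hden : Tendsto (fun x : ℝ => (1 - θ⁻¹ * qpow τ x)⁻¹) atTop (𝓝 1) := by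
    simpa using (((tendsto_qpow_atTop (hz.1.trans hz.2)).const_mul θ⁻¹).const_sub 1).inv₀
      (by simp)
  simpa [div_eq_mul_inv] using (isBigO_pow_mul_qpow_atTop hz.1 e).mul (hden.isBigO_one ℝ)

lemma isBigO_pow_mul_qpow_div_atBot (e : ℕ) {θ : ℂ} (hθ : θ ≠ 0) {τ z : ℂ}
    (hz : z.im ∈ Set.Ioo 0 τ.im) :
    (fun x : ℝ => (x : ℂ) ^ e * qpow z x / (1 - θ⁻¹ * qpow τ x)) =O[atBot]
      fun x => (x ^ 2)⁻¹ := by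
  have hden : Tendsto (fun x : ℝ => (qpow τ (-x) - θ⁻¹)⁻¹) atBot (𝓝 (0 - θ⁻¹)⁻¹) :=
    (((tendsto_qpow_atTop (hz.1.trans hz.2)).comp tendsto_neg_atBot_atTop).sub_const θ⁻¹).inv₀
      (by simpa using hθ)
  have hw : (z - τ).im < 0 := by simpa using hz.2
  refine ((isBigO_pow_mul_qpow_atBot hw e).mul (hden.isBigO_one ℝ)).congr (fun x => ?_)
    (fun x => mul_one _)
  -- after multiplying by `qpow τ (-x)`, the denominator tends to `-θ⁻¹` as `x → -∞`
  have hq : qpow τ (-x) - θ⁻¹ = (1 - θ⁻¹ * qpow τ x) * qpow τ (-x) := by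
    linear_combination θ⁻¹ * qpow_mul_qpow_neg τ x
  rw [hq, ← qpow_mul_qpow_neg_right, ← mul_assoc, ← div_eq_mul_inv,
    mul_div_mul_right _ _ (qpow_ne_zero τ (-x))]

lemma isBigO_Pterm_cofinite (k : ℕ) (lam : ℝ) {θ : ℂ} (hθ : θ ≠ 0) {τ z : ℂ}
    (hz : z.im ∈ Set.Ioo 0 τ.im) :
    (fun m : ℤ => Pterm k lam θ τ z m) =O[cofinite] fun m => ((lam + m) ^ 2)⁻¹ := by
  have hshift : Tendsto (fun m : ℤ => lam + (m : ℝ)) cofinite (atBot ⊔ atTop) := by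
    rw [Int.cofinite_eq]
    exact (tendsto_atBot_add_const_left _ lam (tendsto_intCast_atBot_iff.2 tendsto_id)).sup_sup
      (tendsto_atTop_add_const_left _ lam tendsto_intCast_atTop_atTop)
  refine ((((isBigO_pow_mul_qpow_div_atBot (k - 1) hθ hz).sup
    (isBigO_pow_mul_qpow_div_atTop (k - 1) θ hz)).comp_tendsto
    hshift).congr' ?_ .rfl)
  filter_upwards [eventually_cofinite_ne 0] with m hm
  simp [Pterm, hm]

lemma summable_norm_Pterm (k : ℕ) (lam : ℝ) {θ : ℂ} (hθ : θ ≠ 0) {τ z : ℂ}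
    (hz : z.im ∈ Set.Ioo 0 τ.im) : Summable fun m : ℤ => ‖Pterm k lam θ τ z m‖ := by
  refine summable_of_isBigO (((Real.summable_one_div_int_add_rpow lam 2).2 one_lt_two).congr
    fun m => ?_) (isBigO_Pterm_cofinite k lam hθ hz).norm_left
  rw [Real.rpow_two, sq_abs, one_div, add_comm]

lemma twP_coeff_mul_two_pi_I {k : ℕ} (hk : 1 ≤ k) :
    (-(2 * π * Complex.I)) ^ k / ((k - 1).factorial : ℂ) * (2 * π * Complex.I) =
      -(k : ℂ) * ((-(2 * π * Complex.I)) ^ (k + 1) / ((k + 1 - 1).factorial : ℂ)) := by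
  obtain ⟨j, rfl⟩ := Nat.exists_eq_add_of_le' hk
  simp only [Nat.add_sub_cancel, Nat.factorial_succ]
  push_cast
  field_simp
  ring

lemma hasDerivAt_twP {k : ℕ} (hk : 1 ≤ k) (lam : ℝ) {θ : ℂ} (hθ : θ ≠ 0) {τ z : ℂ}
    (hz : z.im ∈ Set.Ioo 0 τ.im) :
    HasDerivAt (twP k lam θ τ) (-(k : ℂ) * twP (k + 1) lam θ τ z) z := by
  -- a summable majorant on the strip `a < im w < b` comes from the two boundary lines
  obtain ⟨a, b, ha, hb, hzab⟩ : ∃ a b : ℝ, a ∈ Set.Ioo 0 τ.im ∧ b ∈ Set.Ioo 0 τ.im ∧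
      z ∈ Complex.im ⁻¹' Set.Ioo a b := by
    obtain ⟨hz0, hzτ⟩ := hz
    exact ⟨z.im / 2, (z.im + τ.im) / 2, ⟨by linarith, by linarith⟩, ⟨by linarith, by linarith⟩,
      ⟨by linarith, by linarith⟩⟩
  have hsum : HasDerivAt (fun w => ∑' m : ℤ, Pterm k lam θ τ w m)
      (∑' m : ℤ, 2 * π * Complex.I * Pterm (k + 1) lam θ τ z m) z :=
    hasDerivAt_tsum_of_isPreconnected
      (((summable_norm_Pterm (k + 1) lam hθ (z := a * Complex.I) (by simpa using ha)).add
        (summable_norm_Pterm (k + 1) lam hθ (z := b * Complex.I) (by simpa using hb))).mul_left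
          ‖2 * π * Complex.I‖)
      (isOpen_Ioo.preimage Complex.continuous_im)
      ((convex_Ioo a b).linear_preimage Complex.imLm).isPreconnected
      (fun m w _ => hasDerivAt_Pterm lam θ τ hk m w)
      (fun m w hw => by
        rw [norm_mul]
        exact mul_le_mul_of_nonneg_left (norm_Pterm_le_add _ _ _ _ hw.1.le hw.2.le m)
          (norm_nonneg _))
      hzab (summable_norm_Pterm k lam hθ hz).of_norm hzab
  refine (hsum.const_mul ((-(2 * π * Complex.I)) ^ k / ((k - 1).factorial : ℂ))).congr_deriv ?_
  rw [tsum_mul_left, ← mul_assoc, twP_coeff_mul_two_pi_I hk]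
  exact mul_assoc _ _ _

lemma iteratedDeriv_twP_one (lam : ℝ) {θ : ℂ} (hθ : θ ≠ 0) (τ : ℂ) (j : ℕ) :
    Set.EqOn (iteratedDeriv j (twP 1 lam θ τ))
      (fun w => (-1) ^ j * j.factorial * twP (j + 1) lam θ τ w)
      (Complex.im ⁻¹' Set.Ioo 0 τ.im) := by
  induction j with
  | zero => intro w _; simp
  | succ j ih =>
    intro w hw
    have hnhds := (isOpen_Ioo.preimage Complex.continuous_im).mem_nhds hw
    rw [iteratedDeriv_succ, (eventuallyEq_of_mem hnhds ih).deriv_eq,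
      ((hasDerivAt_twP (Nat.le_add_left 1 j) lam hθ hw).const_mul _).deriv, Nat.factorial_succ]
    push_cast
    ring

lemma contDiffOn_twP_one (n : WithTop ℕ∞) (lam : ℝ) {θ : ℂ} (hθ : θ ≠ 0) (τ : ℂ) :
    ContDiffOn ℂ n (twP 1 lam θ τ) (Complex.im ⁻¹' Set.Ioo 0 τ.im) :=
  DifferentiableOn.contDiffOn
    (fun _ hw => (hasDerivAt_twP le_rfl lam hθ hw).differentiableAt.differentiableWithinAt)
    (isOpen_Ioo.preimage Complex.continuous_im)

theorem twistedWeierstrass_deriv_general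
    (k : ℕ) (hk : 1 ≤ k) (lam : ℝ)
    (θ : ℂ) (hθ : θ ≠ 0) (τ : ℂ)
    (z : ℂ) (hz : Reg τ z) :
    ContDiffAt ℂ ((k - 1 : ℕ) : ℕ∞) (fun w : ℂ => twP 1 lam θ τ w) z ∧
    twP k lam θ τ z =
      ((-1 : ℂ) ^ (k - 1) / (Nat.factorial (k - 1) : ℂ)) *
        iteratedDeriv (k - 1) (fun w : ℂ => twP 1 lam θ τ w) z ∧
    (∀ m : ℕ, 1 ≤ m →
      deriv (fun w : ℂ => twP m lam θ τ w) z = -(m : ℂ) * twP (m + 1) lam θ τ z) := by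
  have hzτ := im_mem_Ioo_of_reg hz
  refine ⟨(contDiffOn_twP_one _ lam hθ τ).contDiffAt
      ((isOpen_Ioo.preimage Complex.continuous_im).mem_nhds hzτ), ?_,
    fun m hm => (hasDerivAt_twP hm lam hθ hzτ).deriv⟩
  rw [iteratedDeriv_twP_one lam hθ τ (k - 1) hzτ, Nat.sub_add_cancel hk]
  field_simp
  have hsq : ((-1 : ℂ) ^ (k - 1)) ^ 2 = 1 := by
    rw [← pow_mul, mul_comm, pow_mul, neg_one_sq, one_pow]
  rw [hsq, mul_one, mul_div_cancel_right₀ _ (Nat.cast_ne_zero.2 (Nat.factorial_ne_zero _))]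

/-- For every integer `k ≥ 1` and every `z` in the region
`|q_τ| < |q_z| < 1`, the function `z ↦ P_1[θ,φ](z,τ)` is `(k−1)` times complex
differentiable at `z` and
`P_k[θ,φ](z,τ) = ((−1)^{k−1}/(k−1)!) (∂/∂z)^{k−1} P_1[θ,φ](z,τ)`;
equivalently, `(∂/∂z) P_m[θ,φ](z,τ) = −m · P_{m+1}[θ,φ](z,τ)` for every `m ≥ 1`. -/
theorem twistedWeierstrass_deriv
    (k : ℕ) (hk : 1 ≤ k) (lam : ℝ) (hlam : lam ∈ Set.Ico (0:ℝ) 1)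
    (θ : ℂ) (hθ : θ ≠ 0) (τ : ℂ) (hτ : 0 < τ.im)
    (hden : ∀ m : ℤ, ¬(lam = 0 ∧ θ = 1 ∧ m = 0) →
      1 - θ⁻¹ * qpow τ (lam + (m : ℝ)) ≠ 0)
    (z : ℂ) (hz : Reg τ z) :
    ContDiffAt ℂ ((k - 1 : ℕ) : ℕ∞) (fun w : ℂ => twP 1 lam θ τ w) z ∧
    twP k lam θ τ z =
      ((-1 : ℂ) ^ (k - 1) / (Nat.factorial (k - 1) : ℂ)) *
        iteratedDeriv (k - 1) (fun w : ℂ => twP 1 lam θ τ w) z ∧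
    (∀ m : ℕ, 1 ≤ m →
      deriv (fun w : ℂ => twP m lam θ τ w) z = -(m : ℂ) * twP (m + 1) lam θ τ z) :=
  twistedWeierstrass_deriv_general k hk lam θ hθ τ z hz
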